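/- arXiv:2209.02312 — 9 statements merged into one kernel-verified Lean document; each statement's English description precedes it below -/
import Mathlib

section
/- J₁(0)-law of consistency: Let A ∈ ℂ^{n×n}, B ∈ ℂ^{m×m} and let k, ℓ ≥ 0. Then the equation Xᵀ (A ⊕ 0_k) X = B ⊕ 0_ℓ is consistent if and only if the equation Yᵀ A Y = B is consistent. -/
open Matrix

/-- **`J₁(0)`-law of consistency.** For `k, ℓ ≥ 0`, the equation `Xᵀ (A ⊕ 0ₖ) X = B ⊕ 0_ℓ`
is consistent iff `Yᵀ A Y = B` is consistent. -/
theorem J1_law {n m : ℕ} (k ℓ : ℕ)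
    (A : Matrix (Fin n) (Fin n) ℂ) (B : Matrix (Fin m) (Fin m) ℂ) :
    (∃ X : Matrix (Fin n ⊕ Fin k) (Fin m ⊕ Fin ℓ) ℂ,
        Xᵀ * (Matrix.fromBlocks A 0 0 (0 : Matrix (Fin k) (Fin k) ℂ)) * X =
          Matrix.fromBlocks B 0 0 (0 : Matrix (Fin ℓ) (Fin ℓ) ℂ)) ↔
      (∃ Y : Matrix (Fin n) (Fin m) ℂ, Yᵀ * A * Y = B) := by
  constructor
  · rintro ⟨X, hX⟩
    refine ⟨X.toBlocks₁₁, ?_⟩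
    have h := Matrix.ext_iff.2 hX
    ext i j
    have := h (Sum.inl i) (Sum.inl j)
    simpa [Matrix.mul_apply, Matrix.fromBlocks, Matrix.toBlocks₁₁,
      Fintype.sum_sum_type, Finset.mul_sum, Finset.sum_mul] using this
  · rintro ⟨Y, hY⟩
    refine ⟨Matrix.fromBlocks Y 0 0 0, ?_⟩
    simp [Matrix.fromBlocks_transpose, Matrix.fromBlocks_multiply, hY]
end

section
/- For every k ≥ 1, the canonical Type-I block Γ_k is congruent to the tridiagonal matrix Γ̃_k; that is, there exists an invertible P ∈ ℂ^{k×k} with Pᵀ Γ_k P = Γ̃_k. -/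
open Matrix

/-- The canonical Type-I block `Γ_k`: its `(i,j)` entry (1-indexed) equals `(-1)^(k-i)` when
`i + j = k + 1` or `i + j = k + 2`, and `0` otherwise.  Here indices are 0-indexed, so the
condition reads `i + j + 1 = k ∨ i + j = k` (with `i + j` the 0-indexed sum `i + j`,
i.e. `(i+1) + (j+1) = k + 1` resp. `k + 2`), and the value is `(-1)^(k - 1 - i)`. -/
def Gamma (k : ℕ) : Matrix (Fin k) (Fin k) ℂ :=
  Matrix.of fun i j : Fin k =>
    if (i : ℕ) + (j : ℕ) + 1 = k ∨ (i : ℕ) + (j : ℕ) = k then (-1 : ℂ) ^ (k - 1 - (i : ℕ)) else 0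

/-- The tridiagonal matrix `Γ̃_k`: the `(1,1)` entry is `1`, all superdiagonal entries are `1`,
the subdiagonal entries (1-indexed positions `(j+1, j)`) equal `(-1)^j`, and all other entries
are `0`.  (0-indexed: entry `(i, i-1)` equals `(-1)^i`.) -/
def GammaTilde (k : ℕ) : Matrix (Fin k) (Fin k) ℂ :=
  Matrix.of fun i j : Fin k =>
    if (i : ℕ) = 0 ∧ (j : ℕ) = 0 then 1
    else if (j : ℕ) = (i : ℕ) + 1 then 1
    else if (i : ℕ) = (j : ℕ) + 1 then (-1 : ℂ) ^ (i : ℕ)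
    else 0

/-- Index permutation: position of the `j`-th new basis vector. -/
def sig (k j : ℕ) : ℕ := if (j + k) % 2 = 0 then (k + j) / 2 else (k - 1 - j) / 2

/-- Signs for the change of basis. -/
noncomputable def sgn (k : ℕ) : ℕ → ℂ
  | 0 => Complex.I ^ (k - 1 - sig k 0)
  | j + 1 => (-1 : ℂ) ^ (k - 1 - sig k j) * (sgn k j)⁻¹

lemma sgn_ne_zero (k j : ℕ) : sgn k j ≠ 0 := by
  induction j with
  | zero => simp [sgn, Complex.I_ne_zero]
  | succ j ih =>
    simp only [sgn]
    exact mul_ne_zero (pow_ne_zero _ (by norm_num)) (inv_ne_zero ih)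

lemma sig_lt (k j : ℕ) (h : j < k) : sig k j < k := by
  unfold sig; split_ifs <;> omega

lemma sig_inj (k i j : ℕ) (hi : i < k) (hj : j < k) (h : sig k i = sig k j) : i = j := by
  unfold sig at h; split_ifs at h <;> omega

lemma sig_sum (k i j : ℕ) (hi : i < k) (hj : j < k) :
    (sig k i + sig k j + 1 = k ∨ sig k i + sig k j = k) ↔
      ((i = 0 ∧ j = 0) ∨ j = i + 1 ∨ i = j + 1) := by
  unfold sig; split_ifs <;> omega

lemma sig_parity (k j : ℕ) (h : j + 1 < k) :
    ((k - 1 - sig k j) + (k - 1 - sig k (j + 1))) % 2 = (j + 1) % 2 := by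
  unfold sig; split_ifs <;> omega

lemma neg_one_pow_congr' {m n : ℕ} (h : m % 2 = n % 2) : ((-1 : ℂ)) ^ m = (-1) ^ n := by
  rw [← Nat.div_add_mod m 2, ← Nat.div_add_mod n 2, pow_add, pow_add, pow_mul, pow_mul]
  norm_num [h]

lemma sum_ite_coe {k : ℕ} (c : ℕ) (hc : c < k) (f : Fin k → ℂ) :
    ∑ a : Fin k, (if (a : ℕ) = c then f a else 0) = f ⟨c, hc⟩ := by
  rw [Fintype.sum_eq_single (⟨c, hc⟩ : Fin k)]
  · simp
  · intro b hb
    rw [if_neg]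
    exact fun hbc => hb (Fin.ext hbc)

/-- `sgn` products on the diagonal/superdiagonal/subdiagonal. -/
lemma sgn_diag (k : ℕ) : sgn k 0 * sgn k 0 * (-1 : ℂ) ^ (k - 1 - sig k 0) = 1 := by
  simp only [sgn]
  rw [← pow_add, ← two_mul, pow_mul, Complex.I_sq, ← pow_add]
  exact (neg_one_pow_congr' (by omega)).trans (pow_zero _)

lemma sgn_super (k j : ℕ) : sgn k j * sgn k (j + 1) * (-1 : ℂ) ^ (k - 1 - sig k j) = 1 := by
  have h := sgn_ne_zero k j
  simp only [sgn]
  field_simp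
  rw [← pow_mul]
  exact (neg_one_pow_congr' (by omega)).trans (pow_zero _)

lemma sgn_sub (k j : ℕ) (h : j + 1 < k) :
    sgn k (j + 1) * sgn k j * (-1 : ℂ) ^ (k - 1 - sig k (j + 1)) = (-1 : ℂ) ^ (j + 1) := by
  have h0 := sgn_ne_zero k j
  simp only [sgn]
  field_simp
  rw [← pow_add]
  exact neg_one_pow_congr' (sig_parity k j h)

lemma key (k i j : ℕ) (hi : i < k) (hj : j < k) :
    sgn k i *
        (if sig k i + sig k j + 1 = k ∨ sig k i + sig k j = k
          then (-1 : ℂ) ^ (k - 1 - sig k i) else 0) *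
      sgn k j =
    (if i = 0 ∧ j = 0 then 1
      else if j = i + 1 then 1
      else if i = j + 1 then (-1 : ℂ) ^ i
      else 0) := by
  simp only [sig_sum k i j hi hj]
  split_ifs with hC h1 h2 h3 h1' h2' h3'
  · obtain ⟨hi0, hj0⟩ := h1
    rw [hi0, hj0]
    linear_combination sgn_diag k
  · rw [h2]
    linear_combination sgn_super k i
  · rw [h3]
    linear_combination sgn_sub k j (by omega)
  · exfalso; omega
  · exfalso; omega
  · exfalso; omega
  · exfalso; omega
  · ring

/-- For every `k ≥ 1`, the block `Γ_k` is congruent to the tridiagonal matrix `Γ̃_k`. -/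
theorem Gamma_congruent_GammaTilde (k : ℕ) (hk : 1 ≤ k) :
    ∃ P : Matrix (Fin k) (Fin k) ℂ, IsUnit P ∧ Pᵀ * Gamma k * P = GammaTilde k := by
  set P : Matrix (Fin k) (Fin k) ℂ :=
    Matrix.of fun a j : Fin k => if (a : ℕ) = sig k (j : ℕ) then sgn k (j : ℕ) else 0 with hPdef
  refine ⟨P, ?_, ?_⟩
  · apply (Matrix.isUnit_iff_isUnit_det _).mpr (Matrix.isUnit_det_of_left_inverse (B := Matrix.of fun j a : Fin k =>
      if (a : ℕ) = sig k (j : ℕ) then (sgn k (j : ℕ))⁻¹ else 0) ?_)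
    ext i j
    rw [Matrix.mul_apply]
    simp only [hPdef, Matrix.of_apply, ite_mul, zero_mul]
    rw [sum_ite_coe _ (sig_lt k i i.isLt)]
    rw [Matrix.one_apply]
    by_cases hij : i = j
    · subst hij
      simp [inv_mul_cancel₀ (sgn_ne_zero k i)]
    · rw [if_neg hij, if_neg, mul_zero]
      exact fun h => hij (Fin.ext (sig_inj k i j i.isLt j.isLt h))
  · ext i j
    rw [Matrix.mul_apply]
    have hmid : ∀ b : Fin k,
        (Pᵀ * Gamma k) i b = sgn k (i : ℕ) * Gamma k ⟨sig k i, sig_lt k i i.isLt⟩ b := by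
      intro b
      rw [Matrix.mul_apply]
      simp only [hPdef, Matrix.transpose_apply, Matrix.of_apply, ite_mul, zero_mul]
      exact sum_ite_coe _ (sig_lt k i i.isLt) _
    simp only [hmid]
    simp only [hmid, hPdef, Matrix.of_apply, mul_ite, mul_zero]
    rw [sum_ite_coe _ (sig_lt k j j.isLt)]
    simpa [Gamma, GammaTilde] using key k i j i.isLt j.isLt
end

section
/- For every k ≥ 1 and every μ ∈ ℂ, let P_{2k} ∈ ℂ^{2k×2k} be the permutation matrix whose columns are, in order, e₁, e_{k+1}, e₂, e_{k+2}, …, e_k, e_{2k}. Then P_{2k}ᵀ H_{2k}(μ) P_{2k} = H̃_{2k}(μ). In particular, H_{2k}(μ) is congruent to H̃_{2k}(μ). -/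
open Matrix

/-- The Type-II block `H_{2k}(μ) = [[0, I_k], [J_k(μ), 0]]`, written entrywise on `Fin (2*k)`:
rows `0 ≤ i < k` carry the identity block `I_k` in columns `k ≤ j < 2k`, and rows
`k ≤ i < 2k` carry the Jordan block `J_k(μ)` in columns `0 ≤ j < k`. -/
def H (k : ℕ) (μ : ℂ) : Matrix (Fin (2*k)) (Fin (2*k)) ℂ :=
  Matrix.of fun i j : Fin (2*k) =>
    if (i : ℕ) < k then (if (j : ℕ) = (i : ℕ) + k then 1 else 0)
    else if (j : ℕ) + k = (i : ℕ) then μ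
    else if (j : ℕ) + k = (i : ℕ) + 1 ∧ (j : ℕ) < k then 1
    else 0

/-- The tridiagonal version `H̃_{2k}(μ)`: zero diagonal, all superdiagonal entries equal `1`,
and subdiagonal entries `(H̃_{2k}(μ))_{2j,2j-1} = μ` (1-indexed) with the remaining subdiagonal
entries equal to `0`. -/
def HTilde (k : ℕ) (μ : ℂ) : Matrix (Fin (2*k)) (Fin (2*k)) ℂ :=
  Matrix.of fun i j : Fin (2*k) =>
    if (j : ℕ) = (i : ℕ) + 1 then 1
    else if (i : ℕ) = (j : ℕ) + 1 ∧ (i : ℕ) % 2 = 1 then μ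
    else 0

/-- The permutation matrix `P_{2k}` whose columns are, in order,
`e₁, e_{k+1}, e₂, e_{k+2}, …, e_k, e_{2k}` (1-indexed): in 0-indexed terms, column `c` is the
standard basis vector `e_{k·(c % 2) + c / 2}`. -/
def Pmat (k : ℕ) : Matrix (Fin (2*k)) (Fin (2*k)) ℂ :=
  Matrix.of fun i c : Fin (2*k) =>
    if (i : ℕ) = k * ((c : ℕ) % 2) + (c : ℕ) / 2 then 1 else 0

def fperm (k : ℕ) (c : Fin (2*k)) : Fin (2*k) :=
  ⟨k * ((c : ℕ) % 2) + (c : ℕ) / 2, by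
    have := c.isLt
    rcases Nat.mod_two_eq_zero_or_one (c : ℕ) with h | h <;> simp [h] <;> omega⟩

lemma Pmat_apply (k : ℕ) (a c : Fin (2*k)) :
    Pmat k a c = if a = fperm k c then 1 else 0 := by
  simp [Pmat, fperm, Fin.ext_iff]

lemma conj_apply (k : ℕ) (μ : ℂ) (i j : Fin (2*k)) :
    ((Pmat k)ᵀ * H k μ * Pmat k) i j = H k μ (fperm k i) (fperm k j) := by
  simp [Matrix.mul_apply, Pmat_apply, ite_mul, mul_ite, Finset.sum_ite_eq, Finset.sum_ite_eq']

lemma entry_eq (k : ℕ) (μ : ℂ) (i j : Fin (2*k)) :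
    H k μ (fperm k i) (fperm k j) = HTilde k μ i j := by
  have hi := i.isLt; have hj := j.isLt
  simp only [H, HTilde, fperm, Matrix.of_apply, Fin.val_mk]
  rcases Nat.mod_two_eq_zero_or_one (i : ℕ) with h1 | h1 <;>
  rcases Nat.mod_two_eq_zero_or_one (j : ℕ) with h2 | h2 <;>
    simp only [h1, h2, Nat.mul_zero, Nat.mul_one, Nat.zero_add] <;>
    split_ifs <;> first | rfl | (exfalso; simp -failIfUnchanged only [and_true, and_false, not_and, not_false_iff] at * <;> omega)

lemma fperm_inj (k : ℕ) : Function.Injective (fperm k) := by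
  intro c d h
  have hc := c.isLt; have hd := d.isLt
  rw [Fin.ext_iff] at h ⊢
  simp only [fperm, Fin.val_mk] at h
  rcases Nat.mod_two_eq_zero_or_one (c : ℕ) with h1 | h1 <;>
  rcases Nat.mod_two_eq_zero_or_one (d : ℕ) with h2 | h2 <;>
    simp only [h1, h2, Nat.mul_zero, Nat.mul_one, Nat.zero_add] at h <;> omega

lemma Pmat_inv (k : ℕ) : (Pmat k)ᵀ * Pmat k = 1 := by
  ext c d
  simp only [Matrix.mul_apply, Matrix.transpose_apply, Pmat_apply, ite_mul, mul_ite, one_mul,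
    mul_one, zero_mul, mul_zero]
  rw [Finset.sum_eq_single (fperm k c)]
  · by_cases h : c = d
    · simp [h, Matrix.one_apply]
    · have : fperm k c ≠ fperm k d := fun hh => h (fperm_inj k hh)
      simp [this, Matrix.one_apply, h]
  · intro b _ hb
    simp [hb]
  · simp

/-- For every `k ≥ 1` and `μ ∈ ℂ`, `P_{2k}ᵀ H_{2k}(μ) P_{2k} = H̃_{2k}(μ)`; in particular
`H_{2k}(μ)` is congruent to `H̃_{2k}(μ)`. -/
theorem H_congruent_HTilde (k : ℕ) (hk : 1 ≤ k) (μ : ℂ) :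
    (Pmat k)ᵀ * H k μ * Pmat k = HTilde k μ ∧
      ∃ P : Matrix (Fin (2*k)) (Fin (2*k)) ℂ, IsUnit P ∧ Pᵀ * H k μ * P = HTilde k μ := by
  have hmain : (Pmat k)ᵀ * H k μ * Pmat k = HTilde k μ := by
    ext i j
    rw [conj_apply, entry_eq]
  refine ⟨hmain, Pmat k, ?_, hmain⟩
  exact ⟨⟨Pmat k, (Pmat k)ᵀ, mul_eq_one_comm.mp (Pmat_inv k), Pmat_inv k⟩, rfl⟩
end

section
/- Necessary condition for consistency with symmetric invertible right-hand side: Let A ∈ ℂ^{n×n} and m ≥ 0, and suppose there exists X₀ ∈ ℂ^{n×m} with X₀ᵀ A X₀ = I_m. Then m ≤ rank(A + Aᵀ). -/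
open Matrix

/-- **Necessary condition for consistency with symmetric invertible right-hand side.**
If `X₀ᵀ A X₀ = I_m` for some `X₀ ∈ ℂ^{n×m}`, then `m ≤ rank (A + Aᵀ)`. -/
theorem necessary_condition {n m : ℕ}
    (A : Matrix (Fin n) (Fin n) ℂ) (X₀ : Matrix (Fin n) (Fin m) ℂ)
    (h : X₀ᵀ * A * X₀ = (1 : Matrix (Fin m) (Fin m) ℂ)) :
    m ≤ (A + Aᵀ).rank := by
  have h2 : X₀ᵀ * (A + Aᵀ) * X₀ = (2 : ℂ) • (1 : Matrix (Fin m) (Fin m) ℂ) := by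
    have ht : X₀ᵀ * Aᵀ * X₀ = (1 : Matrix (Fin m) (Fin m) ℂ) := by
      have := congrArg Matrix.transpose h
      simpa [Matrix.transpose_mul, Matrix.mul_assoc] using this
    rw [Matrix.mul_add, Matrix.add_mul, h, ht]
    rw [two_smul]
  have hr : ((2 : ℂ) • (1 : Matrix (Fin m) (Fin m) ℂ)).rank = m := by
    have hu : IsUnit ((2 : ℂ) • (1 : Matrix (Fin m) (Fin m) ℂ)) := by
      rw [Matrix.isUnit_iff_isUnit_det, Matrix.det_smul, Matrix.det_one, mul_one]
      exact isUnit_iff_ne_zero.mpr (pow_ne_zero _ two_ne_zero)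
    rw [Matrix.rank_of_isUnit _ hu]
    simp
  calc m = (X₀ᵀ * (A + Aᵀ) * X₀).rank := by rw [h2, hr]
    _ ≤ (X₀ᵀ * (A + Aᵀ)).rank := Matrix.rank_mul_le_left _ _
    _ ≤ (A + Aᵀ).rank := Matrix.rank_mul_le_right _ _
end

section
/- For every k ≥ 3, the equation Xᵀ (Γ̃_k ⊕ H₂(-1)) X = I₂ ⊕ Γ̃_{k-2} is consistent; that is, there exists X ∈ ℂ^{(k+2)×k} with Xᵀ (Γ̃_k ⊕ H₂(-1)) X = I₂ ⊕ Γ̃_{k-2}. -/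
open Matrix

/-- Upper-left block of the solution `X`. -/
def BCD_P (k : ℕ) : Matrix (Fin k) (Fin 2) ℂ :=
  Matrix.of fun r a =>
    if (a : ℕ) = 0 then
      (if (r : ℕ) = 0 then 1 else if (r : ℕ) = 1 then -Complex.I else 0)
    else
      (if (r : ℕ) = 0 then -1 else if (r : ℕ) = 2 then Complex.I else 0)

/-- Upper-right block of the solution `X`. -/
def BCD_Q (k : ℕ) : Matrix (Fin k) (Fin (k - 2)) ℂ :=
  Matrix.of fun r j =>
    if (j : ℕ) = 0 then
      (if (r : ℕ) = 0 then Complex.I else if (r : ℕ) = 1 then 1 else if (r : ℕ) = 2 then 1 else 0)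
    else
      (if (r : ℕ) = (j : ℕ) + 2 then 1 else 0)

/-- Lower-left block of the solution `X`. -/
def BCD_R : Matrix (Fin 2) (Fin 2) ℂ := !![0, -Complex.I; 1, 0]

/-- Lower-right block of the solution `X`. -/
def BCD_S (k : ℕ) : Matrix (Fin 2) (Fin (k - 2)) ℂ :=
  Matrix.of fun h j =>
    if (h : ℕ) = 1 then (if (j : ℕ) = 0 then Complex.I else if (j : ℕ) = 1 then 1 else 0) else 0

lemma P_col (k : ℕ) (hk : 3 ≤ k) (t : Fin k) (a : Fin 2) :
    BCD_P k t a =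
      (if (a : ℕ) = 0 then
        (if t = (⟨0, by omega⟩ : Fin k) then 1 else 0)
          + (if t = (⟨1, by omega⟩ : Fin k) then -Complex.I else 0)
      else
        (if t = (⟨0, by omega⟩ : Fin k) then -1 else 0)
          + (if t = (⟨2, by omega⟩ : Fin k) then Complex.I else 0)) := by
  simp only [BCD_P, of_apply, Fin.ext_iff]
  split_ifs <;> first | rfl | omega | simp_all

lemma Q_col0 (k : ℕ) (hk : 3 ≤ k) (t : Fin k) (j : Fin (k - 2)) (hj : (j : ℕ) = 0) :
    BCD_Q k t j =
      (if t = (⟨0, by omega⟩ : Fin k) then Complex.I else 0)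
        + ((if t = (⟨1, by omega⟩ : Fin k) then 1 else 0)
          + (if t = (⟨2, by omega⟩ : Fin k) then 1 else 0)) := by
  simp only [BCD_Q, of_apply, hj, if_pos rfl, Fin.ext_iff]
  split_ifs <;> first | rfl | omega | simp_all

lemma Q_colne (k : ℕ) (hk : 3 ≤ k) (t : Fin k) (j : Fin (k - 2)) (hj : ¬ (j : ℕ) = 0) :
    BCD_Q k t j = (if t = (⟨(j : ℕ) + 2, by omega⟩ : Fin k) then 1 else 0) := by
  simp only [BCD_Q, of_apply, if_neg hj, Fin.ext_iff]

lemma E1 (k : ℕ) (hk : 3 ≤ k) :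
    (BCD_P k)ᵀ * GammaTilde k * BCD_P k + BCD_Rᵀ * (!![0, 1; -1, 0] : Matrix (Fin 2) (Fin 2) ℂ) * BCD_R = 1 := by
  ext a b
  simp only [Matrix.add_apply, Matrix.mul_apply, Matrix.transpose_apply]
  fin_cases a <;> fin_cases b <;>
    simp only [P_col k hk, Fin.isValue, Fin.val_zero, Fin.val_one, BCD_R] <;>
    norm_num [mul_add, add_mul, ite_mul, mul_ite, Finset.sum_add_distrib,
      Finset.sum_ite_eq', Fin.sum_univ_two, Matrix.one_apply] <;>
    simp [GammaTilde]

lemma E2 (k : ℕ) (hk : 3 ≤ k) :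
    (BCD_P k)ᵀ * GammaTilde k * BCD_Q k + BCD_Rᵀ * (!![0, 1; -1, 0] : Matrix (Fin 2) (Fin 2) ℂ) * BCD_S k = 0 := by
  ext a j
  simp only [Matrix.add_apply, Matrix.mul_apply, Matrix.transpose_apply, Matrix.zero_apply]
  by_cases hj : (j : ℕ) = 0
  · fin_cases a <;>
      simp only [P_col k hk, Q_col0 k hk _ _ hj, Fin.isValue, Fin.val_zero, Fin.val_one,
        BCD_R, BCD_S] <;>
      norm_num [mul_add, add_mul, ite_mul, mul_ite, Finset.sum_add_distrib,
        Finset.sum_ite_eq', Fin.sum_univ_two, hj] <;>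
      simp [GammaTilde] <;> ring
  · fin_cases a <;>
      simp only [P_col k hk, Q_colne k hk _ _ hj, Fin.isValue, Fin.val_zero, Fin.val_one,
        BCD_R, BCD_S] <;>
      norm_num [mul_add, add_mul, ite_mul, mul_ite, Finset.sum_add_distrib,
        Finset.sum_ite_eq', Fin.sum_univ_two, hj] <;>
      by_cases hj1 : (j : ℕ) = 1 <;>
      simp [GammaTilde, hj, hj1] <;> norm_num

lemma E3 (k : ℕ) (hk : 3 ≤ k) :
    (BCD_Q k)ᵀ * GammaTilde k * BCD_P k + (BCD_S k)ᵀ * (!![0, 1; -1, 0] : Matrix (Fin 2) (Fin 2) ℂ) * BCD_R = 0 := by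
  ext j a
  simp only [Matrix.add_apply, Matrix.mul_apply, Matrix.transpose_apply, Matrix.zero_apply]
  by_cases hj : (j : ℕ) = 0
  · fin_cases a <;>
      simp only [P_col k hk, Q_col0 k hk _ _ hj, Fin.isValue, Fin.val_zero, Fin.val_one,
        BCD_R, BCD_S] <;>
      norm_num [mul_add, add_mul, ite_mul, mul_ite, Finset.sum_add_distrib,
        Finset.sum_ite_eq', Fin.sum_univ_two, hj] <;>
      simp [GammaTilde] <;> ring
  · fin_cases a <;>
      simp only [P_col k hk, Q_colne k hk _ _ hj, Fin.isValue, Fin.val_zero, Fin.val_one,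
        BCD_R, BCD_S] <;>
      norm_num [mul_add, add_mul, ite_mul, mul_ite, Finset.sum_add_distrib,
        Finset.sum_ite_eq', Fin.sum_univ_two, hj] <;>
      by_cases hj1 : (j : ℕ) = 1 <;>
      simp [GammaTilde, hj, hj1] <;> norm_num

lemma E4 (k : ℕ) (hk : 3 ≤ k) :
    (BCD_Q k)ᵀ * GammaTilde k * BCD_Q k + (BCD_S k)ᵀ * (!![0, 1; -1, 0] : Matrix (Fin 2) (Fin 2) ℂ) * BCD_S k
      = GammaTilde (k - 2) := by
  have hSHS : (BCD_S k)ᵀ * (!![0, 1; -1, 0] : Matrix (Fin 2) (Fin 2) ℂ) * BCD_S k = 0 := by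
    ext j l
    simp [Matrix.mul_apply, Fin.sum_univ_two, BCD_S]
  rw [hSHS, add_zero]
  ext j l
  simp only [Matrix.mul_apply, Matrix.transpose_apply]
  by_cases hj : (j : ℕ) = 0
  · by_cases hl : (l : ℕ) = 0
    · simp only [Q_col0 k hk _ _ hj, Q_col0 k hk _ _ hl]
      norm_num [mul_add, add_mul, ite_mul, mul_ite, Finset.sum_add_distrib,
        Finset.sum_ite_eq']
      simp [GammaTilde, hj, hl]
      ring
    · simp only [Q_col0 k hk _ _ hj, Q_colne k hk _ _ hl]
      norm_num [mul_add, add_mul, ite_mul, mul_ite, Finset.sum_add_distrib,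
        Finset.sum_ite_eq']
      by_cases hl1 : (l : ℕ) = 1 <;> simp [GammaTilde, hj, hl, hl1] <;> norm_num
  · by_cases hl : (l : ℕ) = 0
    · simp only [Q_colne k hk _ _ hj, Q_col0 k hk _ _ hl]
      norm_num [mul_add, add_mul, ite_mul, mul_ite, Finset.sum_add_distrib,
        Finset.sum_ite_eq']
      by_cases hj1 : (j : ℕ) = 1 <;> simp [GammaTilde, hj, hl, hj1] <;> norm_num
    · simp only [Q_colne k hk _ _ hj, Q_colne k hk _ _ hl]
      norm_num [mul_add, add_mul, ite_mul, mul_ite, Finset.sum_add_distrib,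
        Finset.sum_ite_eq']
      -- goal: GammaTilde k ⟨j+2,_⟩ ⟨l+2,_⟩ = GammaTilde (k-2) j l
      simp only [GammaTilde, of_apply]
      by_cases h2 : (l : ℕ) = (j : ℕ) + 1
      · rw [if_neg (by omega), if_pos (by omega), if_neg (by omega), if_pos h2]
      · by_cases h3 : (j : ℕ) = (l : ℕ) + 1
        · rw [if_neg (by omega), if_neg (by omega), if_pos (by omega),
            if_neg (by omega), if_neg h2, if_pos h3, pow_add]
          norm_num
        · rw [if_neg (by omega), if_neg (by omega), if_neg (by omega),
            if_neg (by omega), if_neg h2, if_neg h3]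

/-- For every `k ≥ 3`, the equation `Xᵀ (Γ̃_k ⊕ H₂(-1)) X = I₂ ⊕ Γ̃_{k-2}` is consistent. -/
theorem GammaTilde_H2_consistent (k : ℕ) (hk : 3 ≤ k) :
    ∃ X : Matrix (Fin k ⊕ Fin 2) (Fin 2 ⊕ Fin (k - 2)) ℂ,
      Xᵀ * (Matrix.fromBlocks (GammaTilde k) 0 0 (!![0, 1; -1, 0] : Matrix (Fin 2) (Fin 2) ℂ)) *
          X = Matrix.fromBlocks (1 : Matrix (Fin 2) (Fin 2) ℂ) 0 0 (GammaTilde (k - 2)) := by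
  refine ⟨Matrix.fromBlocks (BCD_P k) (BCD_Q k) BCD_R (BCD_S k), ?_⟩
  rw [Matrix.fromBlocks_transpose, Matrix.fromBlocks_multiply]
  simp only [Matrix.mul_zero, Matrix.zero_mul, add_zero, zero_add]
  rw [Matrix.fromBlocks_multiply]
  rw [E1 k hk, E2 k hk, E3 k hk, E4 k hk]
end

section
/- Let μ ∈ ℂ with μ ≠ 1 and μ ≠ -1. Then the equation Xᵀ (H̃₂(μ) ⊕ H₂(-1)) X = I₂ is consistent; explicitly, the matrix X₁ ∈ ℂ^{4×2} with rows (1, i), (1/(1+μ), -i/(1+μ)), (0, 1-μ), (-i/(1+μ), 0) satisfies X₁ᵀ (H̃₂(μ) ⊕ H₂(-1)) X₁ = I₂. -/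
open Matrix

/-- For `μ ≠ ±1`, the explicit matrix `X₁` with rows `(1, i)`, `(1/(1+μ), -i/(1+μ))`,
`(0, 1-μ)`, `(-i/(1+μ), 0)` satisfies `X₁ᵀ (H̃₂(μ) ⊕ H₂(-1)) X₁ = I₂`; in particular the
equation `Xᵀ (H̃₂(μ) ⊕ H₂(-1)) X = I₂` is consistent. -/
theorem Ht2_H2_consistent (μ : ℂ) (h1 : μ ≠ 1) (h2 : μ ≠ -1) :
    (Matrix.fromRows !![1, Complex.I; 1 / (1 + μ), -Complex.I / (1 + μ)]
            !![0, 1 - μ; -Complex.I / (1 + μ), 0])ᵀ *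
          (Matrix.fromBlocks (!![0, 1; μ, 0] : Matrix (Fin 2) (Fin 2) ℂ) 0 0
            (!![0, 1; -1, 0] : Matrix (Fin 2) (Fin 2) ℂ)) *
          (Matrix.fromRows !![1, Complex.I; 1 / (1 + μ), -Complex.I / (1 + μ)]
            !![0, 1 - μ; -Complex.I / (1 + μ), 0]) = (1 : Matrix (Fin 2) (Fin 2) ℂ) ∧
      ∃ X : Matrix (Fin 2 ⊕ Fin 2) (Fin 2) ℂ,
        Xᵀ * (Matrix.fromBlocks (!![0, 1; μ, 0] : Matrix (Fin 2) (Fin 2) ℂ) 0 0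
            (!![0, 1; -1, 0] : Matrix (Fin 2) (Fin 2) ℂ)) * X =
          (1 : Matrix (Fin 2) (Fin 2) ℂ) := by
  have hne : (1 + μ) ≠ 0 := fun h => h2 (by linear_combination h)
  have key : (Matrix.fromRows !![1, Complex.I; 1 / (1 + μ), -Complex.I / (1 + μ)]
            !![0, 1 - μ; -Complex.I / (1 + μ), 0])ᵀ *
          (Matrix.fromBlocks (!![0, 1; μ, 0] : Matrix (Fin 2) (Fin 2) ℂ) 0 0
            (!![0, 1; -1, 0] : Matrix (Fin 2) (Fin 2) ℂ)) *
          (Matrix.fromRows !![1, Complex.I; 1 / (1 + μ), -Complex.I / (1 + μ)]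
            !![0, 1 - μ; -Complex.I / (1 + μ), 0]) = (1 : Matrix (Fin 2) (Fin 2) ℂ) := by
    ext i j
    fin_cases i <;> fin_cases j <;>
      simp [Matrix.mul_apply, Fin.sum_univ_succ, Fintype.sum_sum_type,
        Matrix.fromRows_apply_inl, Matrix.fromRows_apply_inr, Matrix.fromBlocks, Matrix.one_apply] <;>
      field_simp <;> ring_nf <;>
      simp [Complex.I_sq] <;> ring
  exact ⟨key, _, key⟩
end

section
/- Let μ ∈ ℂ with μ ≠ 1 and μ ≠ -1, and let k ≥ 2. Then the equation Xᵀ (H̃_{2k}(μ) ⊕ H₂(-1)) X = H̃_{2k-2}(μ) ⊕ I₂ is consistent; that is, there exists X ∈ ℂ^{(2k+2)×2k} with Xᵀ (H̃_{2k}(μ) ⊕ H₂(-1)) X = H̃_{2k-2}(μ) ⊕ I₂. -/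
open Matrix

theorem conj_entry_aux {l n : Type*} [Fintype n] [Fintype l] [DecidableEq n]
    (A : Matrix n n ℂ) (col : l → n → ℂ) (p q : l) :
    ((Matrix.of fun x y => col y x)ᵀ * A * (Matrix.of fun x y => col y x)) p q
      = col p ⬝ᵥ (A *ᵥ col q) := by
  rw [Matrix.mul_assoc]
  rfl

theorem HT_one {k : ℕ} {μ : ℂ} {i j : Fin (2*k)} (h : (j:ℕ) = (i:ℕ)+1) :
    HTilde k μ i j = 1 := by
  unfold HTilde
  rw [Matrix.of_apply, if_pos h]

theorem HT_mu {k : ℕ} {μ : ℂ} {i j : Fin (2*k)} (h : (i:ℕ) = (j:ℕ)+1)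
    (h' : (i:ℕ) % 2 = 1) : HTilde k μ i j = μ := by
  unfold HTilde
  rw [Matrix.of_apply, if_neg (by omega), if_pos ⟨h, h'⟩]

theorem HT_zero {k : ℕ} {μ : ℂ} {i j : Fin (2*k)} (h : ¬((j:ℕ) = (i:ℕ)+1))
    (h' : ¬((i:ℕ) = (j:ℕ)+1 ∧ (i:ℕ) % 2 = 1)) : HTilde k μ i j = 0 := by
  unfold HTilde
  rw [Matrix.of_apply, if_neg h, if_neg h']

/-- Columns of the solution matrix. -/
noncomputable def auxCol (m : ℕ) (μ : ℂ) :
    (Fin (2*(m+1)) ⊕ Fin 2) → (Fin (2*(m+2)) ⊕ Fin 2) → ℂ :=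
  Sum.elim
    (fun j => Pi.single (Sum.inl (Fin.castLE (by omega) j)) 1 +
      if (j:ℕ) = 2*m+1 then
        (Pi.single (Sum.inl (⟨2*m+3, by omega⟩ : Fin (2*(m+2)))) (-(1+μ)⁻¹) +
         Pi.single (Sum.inr 0) (-(1+μ)⁻¹) +
         Pi.single (Sum.inr 1) (1-μ)⁻¹)
      else 0)
    (fun c => Pi.single (Sum.inl (⟨2*m+2, by omega⟩ : Fin (2*(m+2)))) (![1, Complex.I] c) +
      Pi.single (Sum.inl (⟨2*m+3, by omega⟩ : Fin (2*(m+2)))) (![(1+μ)⁻¹, -Complex.I*(1+μ)⁻¹] c) +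
      Pi.single (Sum.inr c) (![(1-μ)*(1+μ)⁻¹, Complex.I] c))

/-- For `μ ≠ ±1` and `k ≥ 2`, the equation
`Xᵀ (H̃_{2k}(μ) ⊕ H₂(-1)) X = H̃_{2k-2}(μ) ⊕ I₂` is consistent. -/
theorem Ht2k_H2_consistent (μ : ℂ) (h1 : μ ≠ 1) (h2 : μ ≠ -1) (k : ℕ) (hk : 2 ≤ k) :
    ∃ X : Matrix (Fin (2*k) ⊕ Fin 2) (Fin (2*(k-1)) ⊕ Fin 2) ℂ,
      Xᵀ * (Matrix.fromBlocks (HTilde k μ) 0 0 (!![0, 1; -1, 0] : Matrix (Fin 2) (Fin 2) ℂ)) *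
          X = Matrix.fromBlocks (HTilde (k-1) μ) 0 0 (1 : Matrix (Fin 2) (Fin 2) ℂ) := by
  obtain ⟨m, rfl⟩ : ∃ m, k = m + 2 := ⟨k - 2, by omega⟩
  have hμp : (1 : ℂ) + μ ≠ 0 := fun h => h2 (by linear_combination h)
  have hμm : (1 : ℂ) - μ ≠ 0 := fun h => h1 (by linear_combination -h)
  have e4 : HTilde (m+2) μ ⟨2*m+3, by omega⟩ ⟨2*m+3, by omega⟩ = 0 := by
    apply HT_zero <;> simp only [Fin.val_mk] <;> omega
  have eμ : HTilde (m+2) μ ⟨2*m+3, by omega⟩ ⟨2*m+2, by omega⟩ = μ := by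
    apply HT_mu <;> simp only [Fin.val_mk] <;> omega
  have e21 : HTilde (m+2) μ ⟨2*m+2, by omega⟩ ⟨2*m+3, by omega⟩ = 1 := by
    apply HT_one; simp only [Fin.val_mk] <;> omega
  have e22 : HTilde (m+2) μ ⟨2*m+2, by omega⟩ ⟨2*m+2, by omega⟩ = 0 := by
    apply HT_zero <;> simp only [Fin.val_mk] <;> omega
  refine ⟨Matrix.of fun p q => auxCol m μ q p, ?_⟩
  ext p q
  rw [conj_entry_aux]
  match p, q with
  | Sum.inl i, Sum.inl j =>
    have hHc : HTilde (m+2) μ (Fin.castLE (by omega) i) (Fin.castLE (by omega) j)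
        = HTilde (m+2-1) μ i j := by
      simp [HTilde]
    have e2 : HTilde (m+2) μ ⟨2*m+3, by omega⟩ (Fin.castLE (by omega) j) = 0 := by
      have := j.isLt
      apply HT_zero <;> simp only [Fin.val_mk, Fin.coe_castLE] <;> omega
    have e3 : HTilde (m+2) μ (Fin.castLE (by omega) i) ⟨2*m+3, by omega⟩ = 0 := by
      have := i.isLt
      apply HT_zero <;> simp only [Fin.val_mk, Fin.coe_castLE] <;> omega
    simp only [auxCol, Sum.elim_inl]
    by_cases hj : (j:ℕ) = 2*m+1 <;> by_cases hi : (i:ℕ) = 2*m+1 <;>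
      simp only [hi, hj, if_true, if_false, eq_self_iff_true, if_neg, add_zero,
        mulVec_add, mulVec_zero, dotProduct_add, add_dotProduct, zero_dotProduct,
        dotProduct_zero, mulVec_single, Pi.smul_apply, op_smul_eq_mul, Matrix.col_apply, single_dotProduct,
        fromBlocks_apply₁₁, fromBlocks_apply₁₂, fromBlocks_apply₂₁, fromBlocks_apply₂₂,
        Matrix.of_apply, Matrix.zero_apply, hHc, e2, e3, e4,
        Matrix.cons_val', Matrix.cons_val_zero, Matrix.cons_val_one, Matrix.head_cons,
        Matrix.head_fin_const, Matrix.empty_val', Matrix.cons_val_fin_one, Fin.zero_eta, Fin.mk_one] <;>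
      ring
  | Sum.inl i, Sum.inr c =>
    have e3 : HTilde (m+2) μ (Fin.castLE (by omega) i) ⟨2*m+3, by omega⟩ = 0 := by
      have := i.isLt
      apply HT_zero <;> simp only [Fin.val_mk, Fin.coe_castLE] <;> omega
    simp only [auxCol, Sum.elim_inl, Sum.elim_inr]
    by_cases hi : (i:ℕ) = 2*m+1
    · have d1 : HTilde (m+2) μ (Fin.castLE (by omega) i) ⟨2*m+2, by omega⟩ = 1 := by
        apply HT_one; simp only [Fin.val_mk, Fin.coe_castLE] <;> omega
      fin_cases c <;>
        simp only [hi, if_true, if_false, eq_self_iff_true, if_neg, add_zero,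
          mulVec_add, mulVec_zero, dotProduct_add, add_dotProduct, zero_dotProduct,
          dotProduct_zero, mulVec_single, Pi.smul_apply, op_smul_eq_mul, Matrix.col_apply, single_dotProduct,
          fromBlocks_apply₁₁, fromBlocks_apply₁₂, fromBlocks_apply₂₁, fromBlocks_apply₂₂,
          Matrix.of_apply, Matrix.zero_apply, d1, e3, e4, eμ,
          Matrix.cons_val', Matrix.cons_val_zero, Matrix.cons_val_one, Matrix.head_cons,
          Matrix.head_fin_const, Matrix.empty_val', Matrix.cons_val_fin_one, Fin.zero_eta, Fin.mk_one] <;>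
        field_simp <;> ring
    · have d0 : HTilde (m+2) μ (Fin.castLE (by omega) i) ⟨2*m+2, by omega⟩ = 0 := by
        have := i.isLt
        apply HT_zero <;> simp only [Fin.val_mk, Fin.coe_castLE] <;> omega
      fin_cases c <;>
        simp only [hi, if_true, if_false, eq_self_iff_true, if_neg, add_zero,
          mulVec_add, mulVec_zero, dotProduct_add, add_dotProduct, zero_dotProduct,
          dotProduct_zero, mulVec_single, Pi.smul_apply, op_smul_eq_mul, Matrix.col_apply, single_dotProduct,
          fromBlocks_apply₁₁, fromBlocks_apply₁₂, fromBlocks_apply₂₁, fromBlocks_apply₂₂,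
          Matrix.of_apply, Matrix.zero_apply, d0, e3, e4, eμ,
          Matrix.cons_val', Matrix.cons_val_zero, Matrix.cons_val_one, Matrix.head_cons,
          Matrix.head_fin_const, Matrix.empty_val', Matrix.cons_val_fin_one, Fin.zero_eta, Fin.mk_one] <;>
        ring
  | Sum.inr f, Sum.inl j =>
    have f2 : HTilde (m+2) μ ⟨2*m+2, by omega⟩ (Fin.castLE (by omega) j) = 0 := by
      have := j.isLt
      apply HT_zero <;> simp only [Fin.val_mk, Fin.coe_castLE] <;> omega
    have f1 : HTilde (m+2) μ ⟨2*m+3, by omega⟩ (Fin.castLE (by omega) j) = 0 := by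
      have := j.isLt
      apply HT_zero <;> simp only [Fin.val_mk, Fin.coe_castLE] <;> omega
    simp only [auxCol, Sum.elim_inl, Sum.elim_inr]
    by_cases hj : (j:ℕ) = 2*m+1 <;>
      fin_cases f <;>
      simp only [hj, if_true, if_false, eq_self_iff_true, if_neg, add_zero,
        mulVec_add, mulVec_zero, dotProduct_add, add_dotProduct, zero_dotProduct,
        dotProduct_zero, mulVec_single, Pi.smul_apply, op_smul_eq_mul, Matrix.col_apply, single_dotProduct,
        fromBlocks_apply₁₁, fromBlocks_apply₁₂, fromBlocks_apply₂₁, fromBlocks_apply₂₂,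
        Matrix.of_apply, Matrix.zero_apply, f1, f2, e4, e21,
        Matrix.cons_val', Matrix.cons_val_zero, Matrix.cons_val_one, Matrix.head_cons,
        Matrix.head_fin_const, Matrix.empty_val', Matrix.cons_val_fin_one, Fin.zero_eta, Fin.mk_one] <;>
      field_simp <;> ring
  | Sum.inr f, Sum.inr c =>
    simp only [auxCol, Sum.elim_inr]
    fin_cases f <;> fin_cases c <;>
      simp only [add_zero, mulVec_add, mulVec_zero, dotProduct_add, add_dotProduct,
        zero_dotProduct, dotProduct_zero, mulVec_single, Pi.smul_apply, op_smul_eq_mul, Matrix.col_apply, single_dotProduct,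
        fromBlocks_apply₁₁, fromBlocks_apply₁₂, fromBlocks_apply₂₁, fromBlocks_apply₂₂,
        Matrix.of_apply, Matrix.zero_apply, e4, eμ, e21, e22, Matrix.one_apply,
        Matrix.cons_val', Matrix.cons_val_zero, Matrix.cons_val_one, Matrix.head_cons,
        Matrix.head_fin_const, Matrix.empty_val', Matrix.cons_val_fin_one, Fin.zero_eta, Fin.mk_one] <;>
      field_simp <;> ring_nf <;> simp [Complex.I_sq] <;> ring
end

section
/- For every k ≥ 1, the equation Xᵀ (H̃_{4k}(1) ⊕ H₂(-1)) X = H̃_{4k-2}(1) ⊕ I₂ is consistent; that is, there exists X ∈ ℂ^{(4k+2)×4k} with Xᵀ (H̃_{4k}(1) ⊕ H₂(-1)) X = H̃_{4k-2}(1) ⊕ I₂. -/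
open Matrix

noncomputable section HtAux

/-- scalars s₁, s₂ -/
def svA : Fin 2 → ℂ := ![1, -Complex.I]

/-- scalars d₁, d₂ -/
def dvA (k : ℕ) : Fin 2 → ℂ :=
  ![-((2:ℂ)^(2*k))⁻¹, Complex.I * -((2:ℂ)^(2*k))⁻¹]

/-- the vector t -/
def tvA (j : ℕ) : ℂ := if j % 2 = 1 then (-2)^(j/2) else 0

/-- the columns q (as functions of a natural index) -/
def qvA (k : ℕ) (m : Fin 2) (i : ℕ) : ℂ :=
  if i % 2 = 0 then svA m * (-2)^(i/2)
  else if i = 2*(2*k) - 1 then dvA k m else 0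

def PMA (k : ℕ) : Matrix (Fin (2*(2*k))) (Fin (2*(2*k-1))) ℂ :=
  Matrix.of fun c i => if c = Fin.castLE (by omega) i then 1 else 0

def QMA (k : ℕ) : Matrix (Fin (2*(2*k))) (Fin 2) ℂ :=
  Matrix.of fun c m => qvA k m (c : ℕ)

def RMA (k : ℕ) : Matrix (Fin 2) (Fin (2*(2*k-1))) ℂ :=
  Matrix.of fun a j => if a = 1 then -(tvA (j : ℕ)) else 0

def SMA : Matrix (Fin 2) (Fin 2) ℂ :=
  Matrix.of fun a m => if a = 0 then svA m else 0

lemma blk11 (k : ℕ) (hk : 1 ≤ k) :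
    (PMA k)ᵀ * HTilde (2*k) 1 * PMA k
      + (RMA k)ᵀ * (!![0, 1; -1, 0] : Matrix (Fin 2) (Fin 2) ℂ) * RMA k
      = HTilde (2*k-1) 1 := by
  ext i j
  have h1 : ((RMA k)ᵀ * (!![0, 1; -1, 0] : Matrix (Fin 2) (Fin 2) ℂ) * RMA k) i j = 0 := by
    simp [Matrix.mul_apply, Fin.sum_univ_two, RMA]
  have h2 : ((PMA k)ᵀ * HTilde (2*k) 1 * PMA k) i j
      = HTilde (2*k) 1 (Fin.castLE (by omega) i) (Fin.castLE (by omega) j) := by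
    simp [Matrix.mul_apply, PMA, ite_mul, mul_ite, Finset.sum_ite_eq, Finset.sum_ite_eq']
  simp only [Matrix.add_apply, h1, h2, add_zero]
  simp [HTilde]

lemma blk12 (k : ℕ) (hk : 1 ≤ k) :
    (PMA k)ᵀ * HTilde (2*k) 1 * QMA k
      + (RMA k)ᵀ * (!![0, 1; -1, 0] : Matrix (Fin 2) (Fin 2) ℂ) * SMA
      = 0 := by
  ext i m
  have h1 : ((RMA k)ᵀ * (!![0, 1; -1, 0] : Matrix (Fin 2) (Fin 2) ℂ) * SMA) i m
      = tvA (i : ℕ) * svA m := by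
    simp [Matrix.mul_apply, Fin.sum_univ_two, RMA, SMA]
  have h2 : ((PMA k)ᵀ * HTilde (2*k) 1 * QMA k) i m
      = ∑ d : Fin (2*(2*k)), HTilde (2*k) 1 (Fin.castLE (by omega) i) d * qvA k m (d : ℕ) := by
    rw [Matrix.mul_assoc, Matrix.mul_apply]
    simp [Matrix.mul_apply, PMA, QMA, ite_mul, Finset.sum_ite_eq, Finset.sum_ite_eq']
  have hi := i.isLt
  have key : ∑ d : Fin (2*(2*k)), HTilde (2*k) 1 (Fin.castLE (by omega) i) d * qvA k m (d : ℕ)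
      = -(tvA (i : ℕ) * svA m) := by
    rcases Nat.mod_two_eq_zero_or_one (i : ℕ) with hpar | hpar
    · have hz : ∀ d : Fin (2*(2*k)),
          HTilde (2*k) 1 (Fin.castLE (by omega) i) d * qvA k m (d : ℕ) = 0 := by
        intro d
        have hd := d.isLt
        simp only [HTilde, qvA, Matrix.of_apply, Fin.coe_castLE]
        split_ifs <;> try ring
        all_goals (exfalso; omega)
      rw [Finset.sum_eq_zero (fun d _ => hz d)]
      simp [tvA, hpar]
    · set d₁ : Fin (2*(2*k)) := ⟨(i : ℕ)+1, by omega⟩ with hd₁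
      set d₂ : Fin (2*(2*k)) := ⟨(i : ℕ)-1, by omega⟩ with hd₂
      have hsub : ∑ d : Fin (2*(2*k)), HTilde (2*k) 1 (Fin.castLE (by omega) i) d * qvA k m (d : ℕ)
          = ∑ d ∈ ({d₁, d₂} : Finset (Fin (2*(2*k)))),
              HTilde (2*k) 1 (Fin.castLE (by omega) i) d * qvA k m (d : ℕ) := by
        refine (Finset.sum_subset (Finset.subset_univ _) ?_).symm
        intro d _ hd
        have hdl := d.isLt
        have hne1 : (d : ℕ) ≠ (i : ℕ)+1 := by
          intro h; exact hd (by simp [hd₁, Fin.ext_iff, h])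
        have hne2 : (d : ℕ) ≠ (i : ℕ)-1 := by
          intro h; exact hd (by simp [hd₁, hd₂, Fin.ext_iff, h])
        simp only [HTilde, qvA, Matrix.of_apply, Fin.coe_castLE]
        split_ifs <;> try ring
        all_goals (exfalso; omega)
      rw [hsub, Finset.sum_pair (by simp [hd₁, hd₂, Fin.ext_iff]; omega)]
      have v1 : (d₁ : ℕ) = (i : ℕ)+1 := rfl
      have v2 : (d₂ : ℕ) = (i : ℕ)-1 := rfl
      simp only [HTilde, qvA, tvA, Matrix.of_apply, Fin.coe_castLE, v1, v2]
      have e1 : ((i : ℕ)+1)/2 = (i : ℕ)/2 + 1 := by omega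
      have e2 : ((i : ℕ)-1)/2 = (i : ℕ)/2 := by omega
      split_ifs <;> try (exfalso; omega)
      all_goals (rw [e1, e2, pow_succ]; ring)
  simp only [Matrix.add_apply, h1, h2, key, Matrix.zero_apply]
  ring

lemma blk21 (k : ℕ) (hk : 1 ≤ k) :
    (QMA k)ᵀ * HTilde (2*k) 1 * PMA k
      + SMAᵀ * (!![0, 1; -1, 0] : Matrix (Fin 2) (Fin 2) ℂ) * RMA k
      = 0 := by
  ext m j
  have h1 : (SMAᵀ * (!![0, 1; -1, 0] : Matrix (Fin 2) (Fin 2) ℂ) * RMA k) m j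
      = -(svA m * tvA (j : ℕ)) := by
    simp [Matrix.mul_apply, Fin.sum_univ_two, RMA, SMA]
  have h2 : ((QMA k)ᵀ * HTilde (2*k) 1 * PMA k) m j
      = ∑ c : Fin (2*(2*k)), qvA k m (c : ℕ) * HTilde (2*k) 1 c (Fin.castLE (by omega) j) := by
    rw [Matrix.mul_apply]
    simp [Matrix.mul_apply, PMA, QMA, mul_ite, Finset.sum_ite_eq, Finset.sum_ite_eq']
  have hj := j.isLt
  have key : ∑ c : Fin (2*(2*k)), qvA k m (c : ℕ) * HTilde (2*k) 1 c (Fin.castLE (by omega) j)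
      = svA m * tvA (j : ℕ) := by
    rcases Nat.mod_two_eq_zero_or_one (j : ℕ) with hpar | hpar
    · have hz : ∀ c : Fin (2*(2*k)),
          qvA k m (c : ℕ) * HTilde (2*k) 1 c (Fin.castLE (by omega) j) = 0 := by
        intro c
        have hc := c.isLt
        simp only [HTilde, qvA, Matrix.of_apply, Fin.coe_castLE]
        split_ifs <;> try ring
        all_goals (exfalso; omega)
      rw [Finset.sum_eq_zero (fun c _ => hz c)]
      simp [tvA, hpar]
    · set c₁ : Fin (2*(2*k)) := ⟨(j : ℕ)-1, by omega⟩ with hc₁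
      rw [Finset.sum_eq_single_of_mem c₁ (Finset.mem_univ _)]
      · have v1 : (c₁ : ℕ) = (j : ℕ)-1 := rfl
        simp only [HTilde, qvA, tvA, Matrix.of_apply, Fin.coe_castLE, v1]
        have e2 : ((j : ℕ)-1)/2 = (j : ℕ)/2 := by omega
        split_ifs <;> try (exfalso; omega)
        all_goals (rw [e2]; ring)
      · intro c _ hc
        have hcl := c.isLt
        have hne : (c : ℕ) ≠ (j : ℕ)-1 := by
          intro h; exact hc (by simp [hc₁, Fin.ext_iff, h])
        simp only [HTilde, qvA, Matrix.of_apply, Fin.coe_castLE]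
        split_ifs <;> try ring
        all_goals (exfalso; omega)
  simp only [Matrix.add_apply, h1, h2, key, Matrix.zero_apply]
  ring

lemma blk22 (k : ℕ) (hk : 1 ≤ k) :
    (QMA k)ᵀ * HTilde (2*k) 1 * QMA k
      + SMAᵀ * (!![0, 1; -1, 0] : Matrix (Fin 2) (Fin 2) ℂ) * SMA
      = 1 := by
  ext l m
  have h1 : (SMAᵀ * (!![0, 1; -1, 0] : Matrix (Fin 2) (Fin 2) ℂ) * SMA) l m = 0 := by
    simp [Matrix.mul_apply, Fin.sum_univ_two, SMA]
  set c₁ : Fin (2*(2*k)) := ⟨2*(2*k)-2, by omega⟩ with hc₁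
  set c₂ : Fin (2*(2*k)) := ⟨2*(2*k)-1, by omega⟩ with hc₂
  have vc₁ : (c₁ : ℕ) = 2*(2*k)-2 := rfl
  have vc₂ : (c₂ : ℕ) = 2*(2*k)-1 := rfl
  have h2 : ((QMA k)ᵀ * HTilde (2*k) 1 * QMA k) l m
      = ∑ c : Fin (2*(2*k)), qvA k l (c : ℕ)
          * ∑ d : Fin (2*(2*k)), HTilde (2*k) 1 c d * qvA k m (d : ℕ) := by
    rw [Matrix.mul_assoc, Matrix.mul_apply]
    simp only [Matrix.mul_apply, Matrix.transpose_apply, QMA, Matrix.of_apply]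
  have inner1 : ∑ d : Fin (2*(2*k)), HTilde (2*k) 1 c₁ d * qvA k m (d : ℕ)
      = dvA k m := by
    rw [Finset.sum_eq_single_of_mem c₂ (Finset.mem_univ _)]
    · simp only [HTilde, qvA, Matrix.of_apply, vc₁, vc₂]
      split_ifs <;> try (exfalso; omega)
      all_goals ring
    · intro d _ hd
      have hdl := d.isLt
      have hne : (d : ℕ) ≠ 2*(2*k)-1 := by
        intro h; exact hd (by simp [hc₂, Fin.ext_iff, h])
      simp only [HTilde, qvA, Matrix.of_apply, vc₁]
      split_ifs <;> try ring
      all_goals (exfalso; omega)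
  have inner2 : ∑ d : Fin (2*(2*k)), HTilde (2*k) 1 c₂ d * qvA k m (d : ℕ)
      = svA m * (-2)^(2*k-1) := by
    rw [Finset.sum_eq_single_of_mem c₁ (Finset.mem_univ _)]
    · simp only [HTilde, qvA, Matrix.of_apply, vc₁, vc₂]
      have e : (2*(2*k)-2)/2 = 2*k-1 := by omega
      split_ifs <;> try (exfalso; omega)
      all_goals (rw [e]; ring)
    · intro d _ hd
      have hdl := d.isLt
      have hne : (d : ℕ) ≠ 2*(2*k)-2 := by
        intro h; exact hd (by simp [hc₁, Fin.ext_iff, h])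
      simp only [HTilde, qvA, Matrix.of_apply, vc₂]
      split_ifs <;> try ring
      all_goals (exfalso; omega)
  have houter : ∑ c : Fin (2*(2*k)), qvA k l (c : ℕ)
          * ∑ d : Fin (2*(2*k)), HTilde (2*k) 1 c d * qvA k m (d : ℕ)
      = qvA k l (2*(2*k)-2) * dvA k m + qvA k l (2*(2*k)-1) * (svA m * (-2)^(2*k-1)) := by
    have hsub : ∑ c : Fin (2*(2*k)), qvA k l (c : ℕ)
          * ∑ d : Fin (2*(2*k)), HTilde (2*k) 1 c d * qvA k m (d : ℕ)
        = ∑ c ∈ ({c₁, c₂} : Finset (Fin (2*(2*k)))), qvA k l (c : ℕ)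
          * ∑ d : Fin (2*(2*k)), HTilde (2*k) 1 c d * qvA k m (d : ℕ) := by
      refine (Finset.sum_subset (Finset.subset_univ _) ?_).symm
      intro c _ hc
      have hcl := c.isLt
      have hne1 : (c : ℕ) ≠ 2*(2*k)-2 := by
        intro h; exact hc (by simp [hc₁, Fin.ext_iff, h])
      have hne2 : (c : ℕ) ≠ 2*(2*k)-1 := by
        intro h; exact hc (by simp [hc₁, hc₂, Fin.ext_iff, h])
      rcases Nat.mod_two_eq_zero_or_one (c : ℕ) with hpar | hpar
      · have hz : ∀ d : Fin (2*(2*k)), HTilde (2*k) 1 c d * qvA k m (d : ℕ) = 0 := by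
          intro d
          have hdl := d.isLt
          simp only [HTilde, qvA, Matrix.of_apply]
          split_ifs <;> try ring
          all_goals (exfalso; omega)
        rw [Finset.sum_eq_zero (fun d _ => hz d)]
        ring
      · have hq : qvA k l (c : ℕ) = 0 := by
          simp only [qvA]
          split_ifs <;> try rfl
          all_goals (exfalso; omega)
        rw [hq, zero_mul]
    rw [hsub, Finset.sum_pair (by simp [hc₁, hc₂, Fin.ext_iff]; omega), inner1, inner2, vc₁, vc₂]
  have hql1 : qvA k l (2*(2*k)-2) = svA l * (-2)^(2*k-1) := by
    simp only [qvA]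
    have e : (2*(2*k)-2)/2 = 2*k-1 := by omega
    split_ifs <;> try (exfalso; omega)
    all_goals rw [e]
  have hql2 : qvA k l (2*(2*k)-1) = dvA k l := by
    simp only [qvA]
    split_ifs <;> try rfl
    all_goals (exfalso; omega)
  simp only [Matrix.add_apply, h1, h2, houter, hql1, hql2, add_zero]
  have hpow : ((-2:ℂ))^(2*k-1) = -(2:ℂ)^(2*k-1) := by
    have hodd : Odd (2*k-1) := ⟨k-1, by omega⟩
    rw [hodd.neg_pow]
  have h2k : (2:ℂ)^(2*k) = (2:ℂ)^(2*k-1) * 2 := by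
    rw [← pow_succ]
    congr 1; omega
  have hne : ((2:ℂ))^(2*k-1) ≠ 0 := pow_ne_zero _ (by norm_num)
  fin_cases l <;> fin_cases m <;>
    simp only [svA, dvA, Matrix.one_apply, Matrix.cons_val_zero, Matrix.cons_val_one,
      Matrix.head_cons, Fin.mk_zero, Fin.mk_one, hpow, h2k] <;>
    norm_num <;>
    field_simp <;>
    ring_nf <;>
    simp [Complex.I_sq]

end HtAux

/-- For every `k ≥ 1`, the equation
`Xᵀ (H̃_{4k}(1) ⊕ H₂(-1)) X = H̃_{4k-2}(1) ⊕ I₂` is consistent. -/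
theorem Ht4k_H2_consistent (k : ℕ) (hk : 1 ≤ k) :
    ∃ X : Matrix (Fin (2*(2*k)) ⊕ Fin 2) (Fin (2*(2*k-1)) ⊕ Fin 2) ℂ,
      Xᵀ * (Matrix.fromBlocks (HTilde (2*k) 1) 0 0
            (!![0, 1; -1, 0] : Matrix (Fin 2) (Fin 2) ℂ)) * X =
        Matrix.fromBlocks (HTilde (2*k-1) 1) 0 0 (1 : Matrix (Fin 2) (Fin 2) ℂ) := by
  refine ⟨Matrix.fromBlocks (PMA k) (QMA k) (RMA k) SMA, ?_⟩
  rw [Matrix.fromBlocks_transpose, Matrix.fromBlocks_multiply, Matrix.fromBlocks_multiply]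
  simp only [Matrix.mul_zero, Matrix.zero_mul, add_zero, zero_add]
  rw [blk11 k hk, blk12 k hk, blk21 k hk, blk22 k hk]
end

section
/- For all natural numbers j, h, k, ℓ, the equation Xᵀ A X = I_{2h+k+ℓ} is consistent for A = H₂(-1)^{⊕j} ⊕ J₃(0)^{⊕h} ⊕ Γ̃₂^{⊕k} ⊕ I_ℓ; that is, there exists X ∈ ℂ^{(2j+3h+2k+ℓ)×(2h+k+ℓ)} with Xᵀ A X = I_{2h+k+ℓ}. -/
open Matrix

/-- For all `j, h, k, ℓ`, the equation `Xᵀ A X = I_{2h+k+ℓ}` is consistent for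
`A = H₂(-1)^{⊕j} ⊕ J₃(0)^{⊕h} ⊕ Γ̃₂^{⊕k} ⊕ I_ℓ`. -/
theorem final_reduction_consistent (j h k ℓ : ℕ) :
    ∃ X : Matrix (((Fin 2 × Fin j) ⊕ (Fin 3 × Fin h)) ⊕ ((Fin 2 × Fin k) ⊕ Fin ℓ))
        (Fin (2*h + k + ℓ)) ℂ,
      Xᵀ *
          (Matrix.fromBlocks
            (Matrix.fromBlocks
              (Matrix.blockDiagonal fun _ : Fin j => (!![0, 1; -1, 0] : Matrix (Fin 2) (Fin 2) ℂ))
              0 0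
              (Matrix.blockDiagonal fun _ : Fin h =>
                (!![0, 1, 0; 0, 0, 1; 0, 0, 0] : Matrix (Fin 3) (Fin 3) ℂ)))
            0 0
            (Matrix.fromBlocks
              (Matrix.blockDiagonal fun _ : Fin k => (!![1, 1; -1, 0] : Matrix (Fin 2) (Fin 2) ℂ))
              0 0
              (1 : Matrix (Fin ℓ) (Fin ℓ) ℂ))) *
          X = (1 : Matrix (Fin (2*h + k + ℓ)) (Fin (2*h + k + ℓ)) ℂ) := by
  classical
  set A : Matrix (((Fin 2 × Fin j) ⊕ (Fin 3 × Fin h)) ⊕ ((Fin 2 × Fin k) ⊕ Fin ℓ))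
      (((Fin 2 × Fin j) ⊕ (Fin 3 × Fin h)) ⊕ ((Fin 2 × Fin k) ⊕ Fin ℓ)) ℂ :=
    (Matrix.fromBlocks
      (Matrix.fromBlocks
        (Matrix.blockDiagonal fun _ : Fin j => (!![0, 1; -1, 0] : Matrix (Fin 2) (Fin 2) ℂ))
        0 0
        (Matrix.blockDiagonal fun _ : Fin h =>
          (!![0, 1, 0; 0, 0, 1; 0, 0, 0] : Matrix (Fin 3) (Fin 3) ℂ)))
      0 0
      (Matrix.fromBlocks
        (Matrix.blockDiagonal fun _ : Fin k => (!![1, 1; -1, 0] : Matrix (Fin 2) (Fin 2) ℂ))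
        0 0
        (1 : Matrix (Fin ℓ) (Fin ℓ) ℂ))) with hA
  set W : Matrix (Fin 3) (Fin 2) ℂ := !![1, 0; 1, Complex.I; 0, -Complex.I] with hW
  set u2 : Matrix (Fin 2) (Fin 1) ℂ := !![1; 0] with hu2
  set Y : Matrix (((Fin 2 × Fin j) ⊕ (Fin 3 × Fin h)) ⊕ ((Fin 2 × Fin k) ⊕ Fin ℓ))
      ((Empty ⊕ (Fin 2 × Fin h)) ⊕ ((Fin 1 × Fin k) ⊕ Fin ℓ)) ℂ :=
    fromBlocks
      (fromBlocks (0 : Matrix (Fin 2 × Fin j) Empty ℂ) 0 0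
        (blockDiagonal fun _ : Fin h => W))
      0 0
      (fromBlocks (blockDiagonal fun _ : Fin k => u2) 0 0 1) with hYdef
  have hWJW : Wᵀ * !![(0:ℂ), 1, 0; 0, 0, 1; 0, 0, 0] * W = 1 := by
    ext i j
    fin_cases i <;> fin_cases j <;>
      simp [hW, Matrix.mul_apply, Fin.sum_univ_succ, Matrix.one_apply]
  have huGu : u2ᵀ * !![(1:ℂ), 1; -1, 0] * u2 = 1 := by
    ext i j
    fin_cases i <;> fin_cases j <;>
      simp [hu2, Matrix.mul_apply, Fin.sum_univ_succ, Matrix.one_apply]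
  have hEmpty : (0 : Matrix Empty Empty ℂ) = 1 := by
    ext i
    exact i.elim
  have hY : Yᵀ * A * Y = 1 := by
    rw [hYdef, hA]
    simp only [fromBlocks_transpose, transpose_zero, transpose_one, blockDiagonal_transpose,
      fromBlocks_multiply, Matrix.mul_zero, Matrix.zero_mul, Matrix.mul_one, Matrix.one_mul,
      add_zero, zero_add, ← blockDiagonal_mul, ← Matrix.mul_assoc, hWJW, huGu, blockDiagonal_one]
    rw [hEmpty,
      show (blockDiagonal fun _ : Fin h => (1 : Matrix (Fin 2) (Fin 2) ℂ)) = 1 from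
        blockDiagonal_one,
      show (blockDiagonal fun _ : Fin k => (1 : Matrix (Fin 1) (Fin 1) ℂ)) = 1 from
        blockDiagonal_one,
      fromBlocks_one, fromBlocks_one, fromBlocks_one]
  let e : ((Empty ⊕ (Fin 2 × Fin h)) ⊕ ((Fin 1 × Fin k) ⊕ Fin ℓ)) ≃ Fin (2*h + k + ℓ) :=
    Fintype.equivFinOfCardEq (by
      simp only [Fintype.card_sum, Fintype.card_prod, Fintype.card_fin, Fintype.card_empty]
      ring)
  refine ⟨Y.submatrix id e.symm, ?_⟩
  have key : (Y.submatrix id e.symm)ᵀ * A * (Y.submatrix id e.symm)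
      = (Yᵀ * A * Y).submatrix e.symm e.symm := rfl
  rw [key, hY, submatrix_one_equiv e.symm]
end
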